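/- arXiv:1203.6056 — 5 statements merged into one kernel-verified Lean document; each statement's English description precedes it below -/
import Mathlib

section
/- In any G-algebra, x ≻ (y ≻ x) = 1 for all x, y. -/
class GAlgebra (A : Type*) where
  succ : A → A → A
  one : A
  g1 : ∀ x, succ one x = x
  g2 : ∀ x, succ x one = one
  g3 : ∀ x y, succ (succ x y) y = succ (succ y x) x
  g4 : ∀ x y z, succ x (succ y z) = one → succ y (succ x z) = one

open GAlgebra

local infixr:70 " ≻ " => GAlgebra.succ

namespace GAlgebra

variable {A : Type*} [GAlgebra A]

theorem succ_self (x : A) : x ≻ x = one := by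
  have h := g3 x (one : A)
  rw [g2, g1] at h
  exact h.symm

end GAlgebra

theorem stmt2 {A : Type*} [GAlgebra A] (x y : A) : x ≻ (y ≻ x) = (one : A) :=
  g4 y x x (by rw [succ_self, g2])
end

section
/- In any G-algebra, x ≻ (z ≻ ((x ≻ y) ≻ y)) = 1 for all x, y, z. -/
open GAlgebra

local infixr:70 " ≻ " => GAlgebra.succ

namespace GAlgebra

variable {A : Type*} [GAlgebra A]

theorem succ_succ_succ_eq_one (x y : A) : x ≻ ((x ≻ y) ≻ y) = one :=
  g4 (x ≻ y) x y (succ_self (x ≻ y))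

theorem succ_succ_eq_one_of_succ_eq_one {x y : A} (h : x ≻ y = one) (z : A) :
    x ≻ (z ≻ y) = one :=
  g4 z x y (by rw [h, g2])

end GAlgebra

theorem stmt3 {A : Type*} [GAlgebra A] (x y z : A) : x ≻ (z ≻ ((x ≻ y) ≻ y)) = (one : A) :=
  succ_succ_eq_one_of_succ_eq_one (succ_succ_succ_eq_one x y) z
end

section
/- In any G-algebra, if x ≻ y = 1 and y ≻ z = 1 then x ≻ z = 1 (transitivity). -/
open GAlgebra

local infixr:70 " ≻ " => GAlgebra.succ

namespace GAlgebra

variable {A : Type*} [GAlgebra A]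

theorem succ_succ_eq_of_succ_eq_one {x y : A} (h : x ≻ y = one) : (y ≻ x) ≻ x = y := by
  rw [← g3, h, g1]

theorem succ_succ_succ_eq_one_of_succ_eq_one {x y : A} (h : x ≻ y = one) (w : A) :
    x ≻ (w ≻ y) ≻ y = one :=
  g4 _ _ _ (by rw [h, g2])

end GAlgebra

theorem stmt4 {A : Type*} [GAlgebra A] (x y z : A) (h1 : x ≻ y = (one : A)) (h2 : y ≻ z = (one : A)) : x ≻ z = (one : A) := by
  rw [← succ_succ_eq_of_succ_eq_one h2]
  exact succ_succ_succ_eq_one_of_succ_eq_one h1 z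
end

section
/- In any G-algebra, if x ≤ y (i.e., x ≻ y = 1) then y ≻ z ≤ x ≻ z (i.e., (y ≻ z) ≻ (x ≻ z) = 1); that is, ≻ is antitone in its first argument. -/
open GAlgebra

local infixr:70 " ≻ " => GAlgebra.succ

/- Everything lies below `1 = x ≻ y`, so `z ≻ y ≤ x ≻ y`; exchanging (G4) gives
`x ≤ (z ≻ y) ≻ y = (y ≻ z) ≻ z` by (G3), and exchanging once more gives the claim. -/
theorem stmt6 {A : Type*} [GAlgebra A] (x y z : A) (h : x ≻ y = (one : A)) :
    (y ≻ z) ≻ (x ≻ z) = (one : A) := by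
  have hzy : (z ≻ y) ≻ (x ≻ y) = (one : A) := by rw [h, g2]
  have hx : x ≻ ((y ≻ z) ≻ z) = (one : A) := by
    rw [← g3 z y]
    exact g4 _ _ _ hzy
  exact g4 x (y ≻ z) z hx
end

section
/- In any G-algebra, the following conditions are equivalent: (i) ((x ≻ (x ≻ y)) ≻ x) ≻ x = 1; (ii) (x ≻ (x ≻ y)) ∨ x = 1; (iii) (x ≻ (x ≻ y)) ≻ x = x, where x ∨ y = (x ≻ y) ≻ y. -/
open GAlgebra

local infixr:70 " ≻ " => GAlgebra.succ

namespace GAlgebra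

variable {A : Type*} [GAlgebra A]

theorem eq_of_succ_eq_one {a b : A} (hab : a ≻ b = one) (hba : b ≻ a = one) : a = b := by
  simpa only [hab, hba, g1] using (g3 a b).symm

theorem succ_succ_left_eq_one (a x : A) : x ≻ (a ≻ x) = one :=
  g4 a x x (by rw [succ_self, g2])

theorem succ_succ_eq_one_iff (a x : A) : (a ≻ x) ≻ x = one ↔ a ≻ x = x :=
  ⟨fun h => eq_of_succ_eq_one h (succ_succ_left_eq_one a x),
    fun h => by rw [h, succ_self]⟩

end GAlgebra

theorem stmt16 {A : Type*} [GAlgebra A] (x y : A)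
    (sup : A → A → A) (hsup : ∀ a b : A, sup a b = (a ≻ b) ≻ b) :
    ((((x ≻ (x ≻ y)) ≻ x) ≻ x = (one : A)) ↔ (sup (x ≻ (x ≻ y)) x = (one : A))) ∧
    ((sup (x ≻ (x ≻ y)) x = (one : A)) ↔ ((x ≻ (x ≻ y)) ≻ x = x)) := by
  rw [hsup]
  exact ⟨Iff.rfl, succ_succ_eq_one_iff _ x⟩
end
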